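/- arXiv:1406.0552 — 2 statements merged into one kernel-verified Lean document; each statement's English description precedes it below -/
import Mathlib

section
/- Let b, b₃, b₄ > 0 and define G(x) = b₄·F2(√b·x) − b₃·F1(x) for x > 0, where F1(x) = exp(-x²)/erfc(x) and F2(x) = exp(-x²)/erf(x). Then the equation G(x) = x has a unique solution ξ > 0. -/
/-!
`G x - x` is strictly decreasing on `(0, ∞)`: `x ↦ F2 (√b x)` decreases because `erf` increases,
and `F1` increases on all of `ℝ`, its derivative having the sign of
`2/√π · exp (-x²) - 2x · erfc x`, which is nonnegative by the tail bound
`x ∫ₓ^∞ exp (-u²) du ≤ ∫ₓ^∞ u exp (-u²) du = exp (-x²) / 2`.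
Since `F2 (√b x) → ∞` as `x → 0⁺` while `F1` stays bounded, and `G` is bounded above on `[1, ∞)`,
`G x - x` changes sign, and the intermediate value theorem gives the fixed point.
-/

open Real Filter Topology Set

noncomputable def erf (x : ℝ) : ℝ := (2 / Real.sqrt Real.pi) * ∫ u in (0:ℝ)..x, Real.exp (-u^2)

noncomputable def erfc (x : ℝ) : ℝ := 1 - erf x

open MeasureTheory

theorem IsPreconnected.existsUnique_eq_of_strictAntiOn {α δ : Type*} [TopologicalSpace α]
    [LinearOrder α] [LinearOrder δ] [TopologicalSpace δ] [OrderClosedTopology δ]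
    {s : Set α} (hs : IsPreconnected s) {f : α → δ} (hf : ContinuousOn f s)
    (hanti : StrictAntiOn f s) {a c : α} (ha : a ∈ s) (hc : c ∈ s) {y : δ}
    (hfc : f c ≤ y) (hfa : y ≤ f a) : ∃! x ∈ s, f x = y := by
  obtain ⟨x, hxs, hx⟩ := hs.intermediate_value hc ha hf ⟨hfc, hfa⟩
  exact ⟨x, ⟨hxs, hx⟩, fun z ⟨hzs, hz⟩ => hanti.injOn hzs hxs (hz.trans hx.symm)⟩

lemma hasDerivAt_erf (x : ℝ) : HasDerivAt erf (2 / √π * exp (-x ^ 2)) x := by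
  have hint := (continuous_exp.comp (continuous_pow 2).neg).integral_hasStrictDerivAt 0 x
  exact hint.hasDerivAt.const_mul _

@[fun_prop]
lemma continuous_erf : Continuous erf :=
  continuous_iff_continuousAt.2 fun x => (hasDerivAt_erf x).continuousAt

@[simp]
lemma erf_zero : erf 0 = 0 := by simp [erf]

lemma erf_strictMono : StrictMono erf :=
  strictMono_of_deriv_pos fun x => (hasDerivAt_erf x).deriv ▸ by positivity

lemma erf_pos {x : ℝ} (hx : 0 < x) : 0 < erf x := by
  simpa using erf_strictMono hx

lemma integrable_exp_neg_sq : Integrable fun u : ℝ => exp (-u ^ 2) := by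
  simpa using integrable_exp_neg_mul_sq one_pos

lemma erfc_eq_integral_Ioi (x : ℝ) : erfc x = 2 / √π * ∫ u in Ioi x, exp (-u ^ 2) := by
  have hsplit := intervalIntegral.integral_interval_add_Ioi (a := 0) (b := x)
    integrable_exp_neg_sq.integrableOn integrable_exp_neg_sq.integrableOn
  have hgauss : ∫ u in Ioi (0 : ℝ), exp (-u ^ 2) = √π / 2 := by
    simpa using integral_gaussian_Ioi 1
  have : √π ≠ 0 := by positivity
  rw [hgauss] at hsplit
  rw [erfc, erf]
  field_simp
  linarith

lemma integral_Ioi_exp_neg_sq_pos (x : ℝ) : 0 < ∫ u in Ioi x, exp (-u ^ 2) := by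
  rw [setIntegral_pos_iff_support_of_nonneg_ae
    (ae_of_all _ fun u => (exp_pos _).le) integrable_exp_neg_sq.integrableOn]
  simp [Function.support, exp_ne_zero]

lemma erfc_pos (x : ℝ) : 0 < erfc x := by
  rw [erfc_eq_integral_Ioi]
  exact mul_pos (by positivity) (integral_Ioi_exp_neg_sq_pos x)

lemma integral_Ioi_mul_exp_neg_sq (x : ℝ) :
    ∫ u in Ioi x, u * exp (-u ^ 2) = exp (-x ^ 2) / 2 := by
  have hderiv (u : ℝ) : HasDerivAt (fun u : ℝ => -exp (-u ^ 2) / 2) (u * exp (-u ^ 2)) u := by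
    refine (((hasDerivAt_pow 2 u).fun_neg.exp).fun_neg.div_const 2).congr_deriv ?_
    norm_num
    ring
  have hlim : Tendsto (fun u : ℝ => -exp (-u ^ 2) / 2) atTop (𝓝 (-0 / 2)) :=
    ((tendsto_exp_atBot.comp
      (tendsto_neg_atTop_atBot.comp (tendsto_pow_atTop two_ne_zero))).neg).div_const 2
  have hint : Integrable fun u : ℝ => u * exp (-u ^ 2) := by
    simpa using integrable_mul_exp_neg_mul_sq one_pos
  rw [integral_Ioi_of_hasDerivAt_of_tendsto' (fun u _ => hderiv u) hint.integrableOn hlim]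
  ring

lemma mul_integral_Ioi_exp_neg_sq_le (x : ℝ) :
    x * ∫ u in Ioi x, exp (-u ^ 2) ≤ exp (-x ^ 2) / 2 := by
  rcases le_or_gt x 0 with hx | hx
  · nlinarith [integral_Ioi_exp_neg_sq_pos x, exp_pos (-x ^ 2)]
  calc x * ∫ u in Ioi x, exp (-u ^ 2)
      = ∫ u in Ioi x, x * exp (-u ^ 2) := (integral_const_mul _ _).symm
    _ ≤ ∫ u in Ioi x, u * exp (-u ^ 2) := by
        refine setIntegral_mono_on (integrable_exp_neg_sq.const_mul x).integrableOn
          (by simpa using (integrable_mul_exp_neg_mul_sq one_pos).integrableOn) measurableSet_Ioi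
          fun u hu => ?_
        exact mul_le_mul_of_nonneg_right (le_of_lt hu) (exp_pos _).le
    _ = exp (-x ^ 2) / 2 := integral_Ioi_mul_exp_neg_sq x

noncomputable def F1 (x : ℝ) : ℝ := exp (-x ^ 2) / erfc x

noncomputable def F2 (x : ℝ) : ℝ := exp (-x ^ 2) / erf x

lemma hasDerivAt_F1 (x : ℝ) :
    HasDerivAt F1 (exp (-x ^ 2) * (2 / √π * exp (-x ^ 2) - 2 * x * erfc x) / erfc x ^ 2) x := by
  have hnum : HasDerivAt (fun y : ℝ => exp (-y ^ 2)) (exp (-x ^ 2) * -(2 * x)) x := by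
    simpa using (hasDerivAt_pow 2 x).fun_neg.exp
  refine (hnum.div ((hasDerivAt_erf x).const_sub 1) (erfc_pos x).ne').congr_deriv ?_
  rw [erfc]
  ring

lemma monotone_F1 : Monotone F1 := by
  refine monotone_of_deriv_nonneg (fun x => (hasDerivAt_F1 x).differentiableAt)
    fun x => (hasDerivAt_F1 x).deriv ▸ ?_
  have htail : 2 * x * erfc x ≤ 2 / √π * exp (-x ^ 2) := by
    rw [erfc_eq_integral_Ioi]
    nlinarith [mul_integral_Ioi_exp_neg_sq_le x, (by positivity : 0 < 2 / √π)]
  exact div_nonneg (mul_nonneg (exp_pos _).le (sub_nonneg.2 htail)) (sq_nonneg _)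

lemma strictAntiOn_F2 : StrictAntiOn F2 (Ioi 0) := fun x hx y hy hxy =>
  div_lt_div₀ (exp_lt_exp.2 (by nlinarith [mem_Ioi.1 hx])) (erf_strictMono hxy).le
    (exp_pos _).le (erf_pos hx)

lemma tendsto_F2_nhdsGT_zero : Tendsto F2 (𝓝[>] 0) atTop := by
  have herf : Tendsto erf (𝓝[>] 0) (𝓝[>] 0) := by
    refine tendsto_nhdsWithin_of_tendsto_nhds_of_eventually_within _ ?_
      (eventually_mem_nhdsWithin.mono fun x hx => erf_pos hx)
    simpa using (continuous_erf.tendsto 0).mono_left nhdsWithin_le_nhds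
  have hexp : Tendsto (fun x : ℝ => exp (-x ^ 2)) (𝓝[>] 0) (𝓝 1) := by
    simpa using ((by fun_prop : Continuous fun x : ℝ => exp (-x ^ 2)).tendsto 0).mono_left
      nhdsWithin_le_nhds
  exact hexp.pos_mul_atTop one_pos (tendsto_inv_nhdsGT_zero.comp herf)

lemma F1_nonneg (x : ℝ) : 0 ≤ F1 x := div_nonneg (exp_pos _).le (erfc_pos x).le

@[fun_prop]
lemma continuous_F1 : Continuous F1 :=
  continuous_iff_continuousAt.2 fun x => (hasDerivAt_F1 x).continuousAt

lemma continuousOn_F2 : ContinuousOn F2 (Ioi 0) :=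
  ContinuousOn.div (by fun_prop) (by fun_prop) fun _ hx => (erf_pos hx).ne'

noncomputable def G (b b3 b4 x : ℝ) : ℝ := b4 * F2 (√b * x) - b3 * F1 x

section
variable {b b3 b4 : ℝ}

lemma G_eq (hb : 0 ≤ b) (x : ℝ) :
    G b b3 b4 x = b4 * (exp (-(b * x ^ 2)) / erf (√b * x)) - b3 * (exp (-x ^ 2) / erfc x) := by
  rw [G, F2, F1, mul_pow, sq_sqrt hb]

lemma continuousOn_G (hb : 0 < b) : ContinuousOn (G b b3 b4) (Ioi 0) :=
  (continuousOn_const.mul (continuousOn_F2.comp (by fun_prop)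
    fun _ hx => mul_pos (sqrt_pos.2 hb) hx)).sub (by fun_prop)

lemma antitoneOn_G (hb : 0 < b) (hb3 : 0 ≤ b3) (hb4 : 0 ≤ b4) :
    AntitoneOn (G b b3 b4) (Ioi 0) := fun x hx y hy hxy => by
  have hb' := sqrt_pos.2 hb
  have hF2 := strictAntiOn_F2.antitoneOn (mul_pos hb' hx) (mul_pos hb' hy)
    (mul_le_mul_of_nonneg_left hxy hb'.le)
  exact sub_le_sub (mul_le_mul_of_nonneg_left hF2 hb4)
    (mul_le_mul_of_nonneg_left (monotone_F1 hxy) hb3)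

lemma strictAntiOn_G_sub_id (hb : 0 < b) (hb3 : 0 ≤ b3) (hb4 : 0 ≤ b4) :
    StrictAntiOn (fun x => G b b3 b4 x - x) (Ioi 0) := fun x hx y hy hxy => by
  have := antitoneOn_G hb hb3 hb4 hx hy hxy.le
  dsimp only
  linarith

lemma tendsto_G_sub_id_nhdsGT_zero (hb : 0 < b) (hb4 : 0 < b4) :
    Tendsto (fun x => G b b3 b4 x - x) (𝓝[>] 0) atTop := by
  have hscale : Tendsto (√b * ·) (𝓝[>] 0) (𝓝[>] 0) :=
    tendsto_iff_comap.2 (comap_mulLeft_nhdsGT_zero (sqrt_pos.2 hb)).ge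
  have hrest : Tendsto (fun x => -(b3 * F1 x) - x) (𝓝[>] 0) (𝓝 (-(b3 * F1 0) - 0)) :=
    ((by fun_prop : Continuous fun x => -(b3 * F1 x) - x).tendsto 0).mono_left
      nhdsWithin_le_nhds
  refine (((tendsto_F2_nhdsGT_zero.comp hscale).const_mul_atTop hb4).atTop_add hrest).congr
    fun x => ?_
  simp only [G, Function.comp_apply]
  ring

lemma exists_G_lt_self (hb : 0 < b) (hb3 : 0 ≤ b3) (hb4 : 0 ≤ b4) :
    ∃ c > 0, G b b3 b4 c < c := by
  have hb' := sqrt_pos.2 hb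
  have hF2 : 0 ≤ b4 * F2 √b := mul_nonneg hb4 (div_nonneg (exp_pos _).le (erf_pos hb').le)
  set c := b4 * F2 √b + 1
  have hc : 1 ≤ c := by linarith
  refine ⟨c, by linarith, ?_⟩
  calc G b b3 b4 c ≤ G b b3 b4 1 :=
        antitoneOn_G hb hb3 hb4 (mem_Ioi.2 one_pos) (mem_Ioi.2 (by linarith)) hc
    _ ≤ b4 * F2 √b := by simpa [G] using mul_nonneg hb3 (F1_nonneg 1)
    _ < c := by linarith
end

theorem G_unique_fixed_point (b b3 b4 : ℝ) (hb : 0 < b) (hb3 : 0 < b3) (hb4 : 0 < b4) :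
    ∃! x : ℝ, 0 < x ∧
      b4 * (Real.exp (-(b * x^2)) / erf (Real.sqrt b * x))
        - b3 * (Real.exp (-x^2) / erfc x) = x := by
  obtain ⟨a, hGa, ha⟩ := (((tendsto_G_sub_id_nhdsGT_zero hb hb4).eventually_gt_atTop 0).and
    self_mem_nhdsWithin).exists
  obtain ⟨c, hc, hGc⟩ := exists_G_lt_self hb hb3.le hb4.le
  have key := isPreconnected_Ioi.existsUnique_eq_of_strictAntiOn
    ((continuousOn_G hb).sub continuousOn_id) (strictAntiOn_G_sub_id hb hb3.le hb4.le) ha hc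
    (sub_neg.2 hGc).le hGa.le
  simpa [G_eq hb.le, sub_eq_zero] using key
end

section
/- Under the assumptions T_∞ < T₀ < T_f < T_i and positive physical constants, the coefficient ξ > 0 of the Neumann solution (the unique solution of G(x) = x) satisfies erf(ξ√(α_ℓ/α_s)) < (k_s/k_ℓ)·√(α_ℓ/α_s)·((T_i − T_∞)/(T₀ − T_∞))·((T_f − T₀)/(T_i − T_f)). -/
open Real Filter Topology Set
open MeasureTheory

lemma integrable_g : Integrable (fun u : ℝ => Real.exp (-u^2)) := by
  simpa using integrable_exp_neg_mul_sq (one_pos)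

lemma int_Ioi0 : ∫ u in Ioi (0:ℝ), Real.exp (-u^2) = Real.sqrt Real.pi / 2 := by
  simpa using integral_gaussian_Ioi 1

lemma split (x : ℝ) (hx : 0 ≤ x) :
    (∫ u in Ioc (0:ℝ) x, Real.exp (-u^2)) + ∫ u in Ioi x, Real.exp (-u^2)
      = Real.sqrt Real.pi / 2 := by
  rw [← int_Ioi0, ← setIntegral_union (Ioc_disjoint_Ioi le_rfl) measurableSet_Ioi
    integrable_g.integrableOn integrable_g.integrableOn, Ioc_union_Ioi_eq_Ioi hx]

lemma tail_pos {x : ℝ} : 0 < ∫ u in Ioi x, Real.exp (-u^2) :=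
  setIntegral_pos_iff_support_of_nonneg_ae
    (Eventually.of_forall fun u => (Real.exp_pos _).le) integrable_g.integrableOn |>.mpr
    (by simp [Function.support, Real.exp_ne_zero])

lemma erf_lt_one (x : ℝ) : erf x < 1 := by
  rcases le_or_gt x 0 with h | h
  · have h2 : erf x ≤ 0 := by
      have : ∫ u in (0:ℝ)..x, Real.exp (-u^2) ≤ 0 := by
        rw [intervalIntegral.integral_symm]
        simp only [neg_nonpos]
        exact intervalIntegral.integral_nonneg h (fun u _ => (Real.exp_pos _).le)
      exact mul_nonpos_of_nonneg_of_nonpos (by positivity) this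
    linarith
  · have hs : 0 < Real.sqrt Real.pi := Real.sqrt_pos.mpr Real.pi_pos
    have key : ∫ u in (0:ℝ)..x, Real.exp (-u^2) < Real.sqrt Real.pi / 2 := by
      rw [intervalIntegral.integral_of_le h.le]
      have := split x h.le
      have := tail_pos (x := x)
      linarith
    rw [erf]
    rw [div_mul_eq_mul_div, div_lt_one hs]
    linarith
  
lemma erfc_eq {x : ℝ} (hx : 0 ≤ x) :
    erfc x = (2 / Real.sqrt Real.pi) * ∫ u in Ioi x, Real.exp (-u^2) := by
  have hs : 0 < Real.sqrt Real.pi := Real.sqrt_pos.mpr Real.pi_pos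
  have hsplit := split x hx
  rw [erfc, erf, intervalIntegral.integral_of_le hx]
  field_simp
  linarith

lemma transl_aux (x : ℝ) :
    (∫ u in Ioi x, Real.exp (-(u - x)^2)) = ∫ t in Ioi (0:ℝ), Real.exp (-t^2) := by
  have h := (measurePreserving_add_right (volume : Measure ℝ) x).setIntegral_preimage_emb
    (MeasurableEquiv.addRight x).measurableEmbedding
    (fun u => Real.exp (-(u - x)^2)) (Ioi x)
  rw [← h]
  have hset : (fun t => t + x) ⁻¹' (Ioi x) = Ioi (0:ℝ) := by
    ext t; simp [lt_add_iff_pos_left]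
  rw [hset]
  congr 1; ext t; ring_nf

lemma erfc_le_exp {x : ℝ} (hx : 0 ≤ x) : erfc x ≤ Real.exp (-x^2) := by
  have hs : 0 < Real.sqrt Real.pi := Real.sqrt_pos.mpr Real.pi_pos
  rw [erfc_eq hx]
  have hpt : ∀ u ∈ Ioi x, Real.exp (-u^2) ≤ Real.exp (-x^2) * Real.exp (-(u - x)^2) := by
    intro u hu
    rw [← Real.exp_add, Real.exp_le_exp]
    nlinarith [mem_Ioi.mp hu]
  have hint : IntegrableOn (fun u => Real.exp (-x^2) * Real.exp (-(u - x)^2)) (Ioi x) := by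
    apply Integrable.integrableOn
    apply Integrable.const_mul
    have : Integrable (fun u : ℝ => Real.exp (-(u + -x)^2)) := by
      exact integrable_g.comp_add_right (-x)
    simpa [sub_eq_add_neg] using this
  have hmono : (∫ u in Ioi x, Real.exp (-u^2))
      ≤ ∫ u in Ioi x, Real.exp (-x^2) * Real.exp (-(u - x)^2) :=
    setIntegral_mono_on integrable_g.integrableOn hint measurableSet_Ioi hpt
  have heq : (∫ u in Ioi x, Real.exp (-x^2) * Real.exp (-(u - x)^2))
      = Real.exp (-x^2) * (Real.sqrt Real.pi / 2) := by
    rw [integral_const_mul, transl_aux, int_Ioi0]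
  rw [heq] at hmono
  calc 2 / Real.sqrt Real.pi * ∫ u in Ioi x, Real.exp (-u^2)
      ≤ 2 / Real.sqrt Real.pi * (Real.exp (-x^2) * (Real.sqrt Real.pi / 2)) := by
        apply mul_le_mul_of_nonneg_left hmono (by positivity)
    _ = Real.exp (-x^2) := by field_simp

set_option maxHeartbeats 2000000 in
theorem neumann_coefficient_inequality (ks kl cs cl ρ L Tinf T0 Tf Ti ξ αs αl b3 b4 : ℝ)
    (hks : 0 < ks) (hkl : 0 < kl) (hcs : 0 < cs) (hcl : 0 < cl) (hρ : 0 < ρ) (hL : 0 < L)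
    (h1 : Tinf < T0) (h2 : T0 < Tf) (h3 : Tf < Ti)
    (hαs : αs = ks / (ρ * cs)) (hαl : αl = kl / (ρ * cl))
    (hb3 : b3 = cl * (Ti - Tf) / (L * Real.sqrt Real.pi))
    (hb4 : b4 = ks * (Tf - T0) / (ρ * L * Real.sqrt (Real.pi * αs * αl)))
    (hξ : 0 < ξ)
    (hG : b4 * (Real.exp (-((αl / αs) * ξ^2)) / erf (ξ * Real.sqrt (αl / αs)))
      - b3 * (Real.exp (-ξ^2) / erfc ξ) = ξ) :
    erf (ξ * Real.sqrt (αl / αs)) <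
      ks / kl * Real.sqrt (αl / αs) * ((Ti - Tinf) / (T0 - Tinf)) * ((Tf - T0) / (Ti - Tf)) := by
  have hαs0 : 0 < αs := by rw [hαs]; positivity
  have hαl0 : 0 < αl := by rw [hαl]; positivity
  have hπ : 0 < Real.sqrt Real.pi := Real.sqrt_pos.mpr Real.pi_pos
  have hr : 0 < αl / αs := div_pos hαl0 hαs0
  have hsr : 0 < Real.sqrt (αl / αs) := Real.sqrt_pos.mpr hr
  set E := erf (ξ * Real.sqrt (αl / αs)) with hE
  have hE0 : 0 < E := erf_pos (mul_pos hξ hsr)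
  have hc : 0 < erfc ξ := erfc_pos ξ
  have hTf : 0 < Ti - Tf := by linarith
  have hT0 : 0 < Tf - T0 := by linarith
  have hb3p : 0 < b3 := by rw [hb3]; positivity
  have hb4p : 0 < b4 := by
    rw [hb4]
    have h' : 0 < Real.sqrt (Real.pi * αs * αl) := Real.sqrt_pos.mpr (by positivity)
    positivity
  -- from hG : b4 * exp/E = ξ + b3 * exp/erfc
  have h5 : b3 ≤ b3 * (Real.exp (-ξ^2) / erfc ξ) := by
    have : (1:ℝ) ≤ Real.exp (-ξ^2) / erfc ξ := (one_le_div hc).mpr (erfc_le_exp hξ.le)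
    nlinarith
  have h6 : b4 * (Real.exp (-((αl / αs) * ξ^2)) / E) ≤ b4 / E := by
    have he1 : Real.exp (-((αl / αs) * ξ^2)) ≤ 1 := by
      rw [Real.exp_le_one_iff]; nlinarith
    calc b4 * (Real.exp (-((αl / αs) * ξ^2)) / E) ≤ b4 * (1 / E) := by
          gcongr
      _ = b4 / E := by ring
  have hkey : b3 < b4 / E := by nlinarith
  have hEb : E < b4 / b3 := by
    rw [lt_div_iff₀ hb3p]
    rw [lt_div_iff₀ hE0] at hkey
    nlinarith
  -- identity for b4 / b3
  have hsl : Real.sqrt αl * Real.sqrt αl = αl := Real.mul_self_sqrt hαl0.le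
  have hss : Real.sqrt αs * Real.sqrt αs = αs := Real.mul_self_sqrt hαs0.le
  have hsls : 0 < Real.sqrt αl := Real.sqrt_pos.mpr hαl0
  have hsss : 0 < Real.sqrt αs := Real.sqrt_pos.mpr hαs0
  have hsqm : Real.sqrt (Real.pi * αs * αl)
      = Real.sqrt Real.pi * Real.sqrt αs * Real.sqrt αl := by
    rw [Real.sqrt_mul (by positivity), Real.sqrt_mul Real.pi_pos.le]
  have hsqd : Real.sqrt (αl / αs) = Real.sqrt αl / Real.sqrt αs :=
    Real.sqrt_div hαl0.le αs
  have hklid : ρ * cl * αl = kl := by rw [hαl]; field_simp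
  have hid : b4 / b3 = ks / kl * Real.sqrt (αl / αs) * ((Tf - T0) / (Ti - Tf)) := by
    rw [hb3, hb4, hsqm, hsqd, ← hklid]
    field_simp
    ring_nf
    rw [Real.sq_sqrt hαl0.le]
  have hratio : 1 < (Ti - Tinf) / (T0 - Tinf) := (one_lt_div (by linarith)).mpr (by linarith)
  have hQpos : 0 < ks / kl * Real.sqrt (αl / αs) * ((Tf - T0) / (Ti - Tf)) := by
    have := hT0; have := hTf; positivity
  calc E < b4 / b3 := hEb
    _ = ks / kl * Real.sqrt (αl / αs) * ((Tf - T0) / (Ti - Tf)) := hid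
    _ < ks / kl * Real.sqrt (αl / αs) * ((Tf - T0) / (Ti - Tf)) * ((Ti - Tinf) / (T0 - Tinf)) := by
        nlinarith
    _ = ks / kl * Real.sqrt (αl / αs) * ((Ti - Tinf) / (T0 - Tinf)) * ((Tf - T0) / (Ti - Tf)) := by
        ring
end
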